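/- Let q be a positive integer, Q = (q+1)/2, n a positive integer, c_1 ≥ c_2 ≥ … ≥ c_n positive integers, and Δ a nonnegative integer with n + q ≤ Δ ≤ c_1. Then the maximum of ∑_{i=1}^n π(x_i) over all vectors (x_1, …, x_n) of nonnegative integers with x_i ≤ c_i for all i and ∑_{i=1}^n x_i ≤ Δ equals n − 1 + π(Δ − n + 1). -/

import Mathlib

/-!
Write `π (u + 1) = 1 + σ u`, where the excess `σ u = ⌈(u + 1 - q) / ⌈Q⌉⌉` vanishes for `u < q`.
It grows by at most one per unit, and it is superadditive: merging two excesses `u, v ≥ q`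
gains `q - 1` units, which pays for rounding up two ceilings since `⌈Q⌉ ≤ q`. Hence an
allocation with `m` nonzero entries and total at most `Δ` has value
`m + ∑ σ (x i - 1) ≤ m + σ (Δ - m) ≤ n + σ (Δ - n)`, which `(Δ - n + 1, 1, …, 1)` attains.
-/

/-- Ceiling division of natural numbers: `cdiv a b = ⌈a / b⌉` (for `b > 0`). -/
def cdiv (a b : ℕ) : ℕ := (a + b - 1) / b

/-- `⌈Q⌉` where `Q = (q+1)/2`. -/
def Qceil (q : ℕ) : ℕ := cdiv (q + 1) 2

/-- `⌊Q⌋` where `Q = (q+1)/2`. -/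
def Qfloor (q : ℕ) : ℕ := (q + 1) / 2

/-- `π(Δ) = ⌈Δ/q⌉` if `Δ ≤ q`, and `π(Δ) = ⌈(Δ−q)/⌈Q⌉⌉ + 1` if `Δ > q`. -/
def piF (q Δ : ℕ) : ℕ := if Δ ≤ q then cdiv Δ q else cdiv (Δ - q) (Qceil q) + 1

open Finset

lemma cdiv_le_iff {a b k : ℕ} (hb : 0 < b) : cdiv a b ≤ k ↔ a ≤ b * k :=
  ceilDiv_le_iff_le_mul hb

lemma cdiv_mono {b : ℕ} (hb : 0 < b) : Monotone (cdiv · b) :=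
  (gc_mul_ceilDiv hb).monotone_l

lemma zero_cdiv (b : ℕ) : cdiv 0 b = 0 := zero_ceilDiv b

lemma cdiv_eq_one {a b : ℕ} (ha : 0 < a) (hab : a ≤ b) : cdiv a b = 1 := by
  have hle : cdiv a b ≤ 1 := (cdiv_le_iff (ha.trans_le hab)).2 (by omega)
  have hne : ¬cdiv a b ≤ 0 := by rw [cdiv_le_iff (ha.trans_le hab)]; omega
  omega

lemma cdiv_succ_le {b : ℕ} (hb : 0 < b) (a : ℕ) : cdiv (a + 1) b ≤ cdiv a b + 1 := by
  rw [cdiv_le_iff hb, mul_add_one]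
  have := (cdiv_le_iff (a := a) hb).1 le_rfl
  omega

lemma cdiv_add_cdiv_le (a c b : ℕ) : cdiv a b + cdiv c b ≤ cdiv (a + c + (b - 1)) b :=
  Nat.div_add_div_le_add_div.trans (Nat.div_le_div_right (by omega))

lemma Qceil_pos (q : ℕ) : 0 < Qceil q := by
  have : ¬Qceil q ≤ 0 := by rw [Qceil, cdiv_le_iff two_pos]; omega
  omega

lemma Qceil_le {q : ℕ} (hq : 0 < q) : Qceil q ≤ q := by
  rw [Qceil, cdiv_le_iff two_pos]; omega

/-- The excess `σ u` of `π (u + 1)` over `1`. -/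
def piExcess (q u : ℕ) : ℕ := if u < q then 0 else cdiv (u + 1 - q) (Qceil q)

lemma piF_zero (q : ℕ) : piF q 0 = 0 := by
  simp only [piF, zero_le, if_true, zero_cdiv]

lemma piF_succ (q u : ℕ) : piF q (u + 1) = piExcess q u + 1 := by
  unfold piF piExcess
  split_ifs with h₁ h₂ h₂
  · rw [cdiv_eq_one u.succ_pos h₁]
  · omega
  · omega
  · rfl

lemma piExcess_mono (q : ℕ) : Monotone (piExcess q) := by
  intro u v huv
  unfold piExcess
  split_ifs
  · exact le_rfl
  · exact Nat.zero_le _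
  · omega
  · exact cdiv_mono (Qceil_pos q) (by omega)

section piExcess

variable {q : ℕ}

lemma piExcess_succ_le (u : ℕ) : piExcess q (u + 1) ≤ piExcess q u + 1 := by
  unfold piExcess
  rcases lt_trichotomy (u + 1) q with h | h | h
  · simp [h, show u < q by omega]
  · simp [h, cdiv_eq_one one_pos (Qceil_pos q)]
  · rw [if_neg (by omega), if_neg (by omega), show u + 1 + 1 - q = u + 1 - q + 1 by omega]
    exact cdiv_succ_le (Qceil_pos q) _

lemma piExcess_add_le (u d : ℕ) : piExcess q (u + d) ≤ piExcess q u + d := by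
  induction d with
  | zero => rfl
  | succ d ih =>
    rw [← add_assoc]
    exact (piExcess_succ_le _).trans (by omega)

lemma piExcess_add_piExcess_le (hq : 0 < q) (u v : ℕ) :
    piExcess q u + piExcess q v ≤ piExcess q (u + v) := by
  by_cases hu : u < q
  · simpa [piExcess, hu] using piExcess_mono q (Nat.le_add_left v u)
  by_cases hv : v < q
  · simpa [piExcess, hv] using piExcess_mono q (Nat.le_add_right u v)
  simp only [piExcess, hu, hv, show ¬u + v < q by omega, if_false]
  have := Qceil_le hq
  exact (cdiv_add_cdiv_le _ _ _).trans (cdiv_mono (Qceil_pos q) (by omega))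

lemma sum_piExcess_le (hq : 0 < q) {ι : Type*} (s : Finset ι) (y : ι → ℕ) :
    ∑ i ∈ s, piExcess q (y i) ≤ piExcess q (∑ i ∈ s, y i) := by
  induction s using Finset.cons_induction with
  | empty => exact Nat.zero_le _
  | cons a s ha ih =>
    rw [sum_cons, sum_cons]
    exact (Nat.add_le_add_left ih _).trans (piExcess_add_piExcess_le hq _ _)

end piExcess

lemma sum_piF_of_ne_zero {q : ℕ} {ι : Type*} {t : Finset ι} {x : ι → ℕ}
    (hx : ∀ i ∈ t, x i ≠ 0) :
    ∑ i ∈ t, piF q (x i) = #t + ∑ i ∈ t, piExcess q (x i - 1) := by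
  rw [add_comm, card_eq_sum_ones, ← sum_add_distrib]
  refine sum_congr rfl fun i hi => ?_
  rw [← piF_succ, Nat.sub_add_cancel (Nat.one_le_iff_ne_zero.2 (hx i hi))]

lemma sum_sub_one_add_card {ι : Type*} {t : Finset ι} {x : ι → ℕ} (hx : ∀ i ∈ t, x i ≠ 0) :
    ∑ i ∈ t, (x i - 1) + #t = ∑ i ∈ t, x i := by
  rw [card_eq_sum_ones, ← sum_add_distrib]
  exact sum_congr rfl fun i hi => Nat.sub_add_cancel (Nat.one_le_iff_ne_zero.2 (hx i hi))

lemma sum_piF_le {q : ℕ} (hq : 0 < q) {ι : Type*} {s : Finset ι} {x : ι → ℕ} {D : ℕ}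
    (hsum : ∑ i ∈ s, x i ≤ D) (hcard : #s ≤ D) :
    ∑ i ∈ s, piF q (x i) ≤ #s + piExcess q (D - #s) := by
  classical
  set t := s.filter (x · ≠ 0)
  have hx : ∀ i ∈ t, x i ≠ 0 := fun i hi => (mem_filter.1 hi).2
  have hts : #t ≤ #s := card_filter_le _ _
  have hπ : ∑ i ∈ t, piF q (x i) = ∑ i ∈ s, piF q (x i) :=
    sum_filter_of_ne fun i _ h hi => h (by rw [hi, piF_zero])
  have hxt : ∑ i ∈ t, (x i - 1) ≤ D - #t := by
    have : ∑ i ∈ t, x i = ∑ i ∈ s, x i := sum_filter_ne_zero s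
    have := sum_sub_one_add_card hx
    omega
  calc ∑ i ∈ s, piF q (x i)
      = #t + ∑ i ∈ t, piExcess q (x i - 1) := by rw [← hπ, sum_piF_of_ne_zero hx]
    _ ≤ #t + piExcess q (D - #t) :=
        Nat.add_le_add_left ((sum_piExcess_le hq _ _).trans (piExcess_mono q hxt)) _
    _ ≤ #t + (piExcess q (D - #s) + (#s - #t)) := by
        rw [show D - #t = D - #s + (#s - #t) by omega]
        exact Nat.add_le_add_left (piExcess_add_le _ _) _
    _ = #s + piExcess q (D - #s) := by omega

lemma sum_comp_update_const {ι : Type*} [DecidableEq ι] {s : Finset ι} {i : ι} (hi : i ∈ s)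
    (g : ℕ → ℕ) (a b : ℕ) :
    ∑ j ∈ s, g (Function.update (fun _ => a) i b j) = g b + (#s - 1) * g a := by
  simp [Function.apply_update (fun _ => g), sum_update_of_mem hi, card_sdiff, hi]

theorem mdf_max_middle_case_general (q : ℕ) (hq : 0 < q) (n : ℕ) (hn : 0 < n)
    (c : ℕ → ℕ) (hc : ∀ i, 1 ≤ i → i ≤ n → 0 < c i)
    (Δ : ℕ) (h1 : n + q ≤ Δ) (h2 : Δ ≤ c 1) :
    IsGreatest {v : ℕ | ∃ x : ℕ → ℕ,
      (∀ i, 1 ≤ i → i ≤ n → x i ≤ c i) ∧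
      (∑ i ∈ Finset.Icc 1 n, x i ≤ Δ) ∧
      v = ∑ i ∈ Finset.Icc 1 n, piF q (x i)} (n - 1 + piF q (Δ - n + 1)) := by
  have h1n : 1 ∈ Icc 1 n := mem_Icc.2 ⟨le_rfl, hn⟩
  have hvalue : n - 1 + piF q (Δ - n + 1) = n + piExcess q (Δ - n) := by
    rw [piF_succ]; omega
  refine ⟨⟨Function.update (fun _ => 1) 1 (Δ - n + 1), fun i hi hin => ?_, ?_, ?_⟩, ?_⟩
  · rcases eq_or_ne i 1 with rfl | hi1
    · simp only [Function.update_self]; omega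
    · simpa [hi1, Nat.one_le_iff_ne_zero, ← pos_iff_ne_zero] using hc i hi hin
  · have := sum_comp_update_const h1n id 1 (Δ - n + 1)
    simp only [id, Nat.card_Icc, Nat.add_sub_cancel] at this
    omega
  · rw [sum_comp_update_const h1n, Nat.card_Icc, Nat.add_sub_cancel, piF_succ q 0, piExcess,
      if_pos hq]
    omega
  · rintro v ⟨x, -, hsum, rfl⟩
    have := sum_piF_le hq hsum (by rw [Nat.card_Icc]; omega)
    rw [Nat.card_Icc, Nat.add_sub_cancel] at this
    omega

/-- with sorted capacities and `n + q ≤ Δ ≤ c 1`, the maximum of the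
multi-depot formulation `MDF` equals `n − 1 + π(Δ − n + 1)`. -/
theorem mdf_max_middle_case (q : ℕ) (hq : 0 < q) (n : ℕ) (hn : 0 < n)
    (c : ℕ → ℕ) (hc : ∀ i, 1 ≤ i → i ≤ n → 0 < c i)
    (hsort : ∀ i k, 1 ≤ i → i ≤ k → k ≤ n → c k ≤ c i)
    (Δ : ℕ) (h1 : n + q ≤ Δ) (h2 : Δ ≤ c 1) :
    IsGreatest {v : ℕ | ∃ x : ℕ → ℕ,
      (∀ i, 1 ≤ i → i ≤ n → x i ≤ c i) ∧
      (∑ i ∈ Finset.Icc 1 n, x i ≤ Δ) ∧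
      v = ∑ i ∈ Finset.Icc 1 n, piF q (x i)} (n - 1 + piF q (Δ - n + 1)) :=
  mdf_max_middle_case_general q hq n hn c hc Δ h1 h2
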